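/- arXiv:2507.04058 — 3 statements merged into one kernel-verified Lean document; each statement's English description precedes it below -/
import Mathlib

section
/- Let Ω, M, N be measurable spaces, let μ be a probability measure on Ω, let f : Ω → M → N be such that the uncurried map (ω, x) ↦ f ω x is measurable, and let ν be a probability measure on M. Define the mean push-forward μ∗ν = ∫ (f ω)_*ν dμ(ω) (the mixture of the pushforward measures). Then for every probability measure ν′ on N, ∫ d_KL((f ω)_*ν ∥ ν′) dμ(ω) ≥ ∫ d_KL((f ω)_*ν ∥ μ∗ν) dμ(ω). That is, among all probability measures ν′ on N, the mean relative entropy Φ_μ(ν|ν′) = ∫ d_KL((f ω)_*ν ∥ ν′) dμ(ω) is minimized by ν′ = μ∗ν. -/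
open MeasureTheory ProbabilityTheory
open scoped ENNReal NNReal

namespace RMP

open scoped Classical in
/-- The Kullback–Leibler divergence `d_KL(ρ ∥ ρ')`, valued in `ℝ≥0∞`: equal to
`∫ log (dρ/dρ') dρ` when `ρ ≪ ρ'` (and the log-likelihood ratio is `ρ`-integrable),
and `+∞` otherwise. -/
noncomputable def klDiv {α : Type*} [MeasurableSpace α] (ρ ρ' : Measure α) : ℝ≥0∞ :=
  if ρ ≪ ρ' ∧ Integrable (fun x => Real.log (ρ.rnDeriv ρ' x).toReal) ρ then
    ENNReal.ofReal (∫ x, Real.log (ρ.rnDeriv ρ' x).toReal ∂ρ)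
  else ⊤

/-- The mean push-forward `μ ∗ ν = ∫ (f ω)_* ν dμ(ω)`. -/
noncomputable def mpush {Ω M N : Type*} [MeasurableSpace Ω] [MeasurableSpace M] [MeasurableSpace N]
    (μ : Measure Ω) (f : Ω → M → N) (ν : Measure M) : Measure N :=
  μ.bind fun ω => ν.map (f ω)

/-- The mean relative entropy `Φ_μ(ν | ν') = ∫ d_KL((f ω)_* ν ∥ ν') dμ(ω)`. -/
noncomputable def meanRelEnt {Ω M N : Type*} [MeasurableSpace Ω] [MeasurableSpace M]
    [MeasurableSpace N] (μ : Measure Ω) (f : Ω → M → N) (ν : Measure M) (ν' : Measure N) :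
    ℝ≥0∞ :=
  ∫⁻ ω, klDiv (ν.map (f ω)) ν' ∂μ

/-- The Furstenberg entropy `Φ_μ(ν) = Φ_μ(ν | μ ∗ ν)`. -/
noncomputable def furstEnt {Ω M N : Type*} [MeasurableSpace Ω] [MeasurableSpace M]
    [MeasurableSpace N] (μ : Measure Ω) (f : Ω → M → N) (ν : Measure M) : ℝ≥0∞ :=
  meanRelEnt μ f ν (mpush μ f ν)

/-- The push-forward entropy `h(μ) = inf_ν Φ_μ(ν)`, the infimum being over all Borel
probability measures `ν` on `M`. -/
noncomputable def pushEnt {Ω M N : Type*} [MeasurableSpace Ω] [MeasurableSpace M]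
    [MeasurableSpace N] (μ : Measure Ω) (f : Ω → M → N) : ℝ≥0∞ :=
  ⨅ ν : ProbabilityMeasure M, furstEnt μ f (ν : Measure M)

end RMP

/-!
Write `η = μ ∗ ν`, `ρ_ω = (f ω)_* ν` and `L = log (dη/dν')`. When the right-hand side is finite,
`η ≪ ν'` and almost every `ρ_ω` satisfies `ρ_ω ≪ η`, so the chain rule for log-likelihood ratios
gives the compensation identity `d_KL(ρ_ω ∥ ν') = d_KL(ρ_ω ∥ η) + ∫ L dρ_ω`. Averaging over `ω`
turns `∫ L dρ_ω` into `∫ L dη = d_KL(η ∥ ν') ≥ 0` (Gibbs). To stay in `ℝ≥0∞` the positive and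
negative parts of `L` are kept on opposite sides; the negative part is harmless because
`-log t ≤ 1 / t` bounds its integral by `1`.
-/

section Integrability

variable {α : Type*} [MeasurableSpace α] {μ : Measure α} {f g : α → ℝ}

lemma ENNReal.ofReal_add_ofReal_neg (x : ℝ) : ENNReal.ofReal x + ENNReal.ofReal (-x) = ‖x‖ₑ := by
  rcases le_total 0 x with hx | hx
  · simp [ENNReal.ofReal_of_nonpos (neg_nonpos.2 hx), Real.enorm_of_nonneg hx]
  · simp [ENNReal.ofReal_of_nonpos hx, Real.enorm_eq_ofReal_abs, abs_of_nonpos hx]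

lemma integrable_of_lintegral_ofReal_ne_top (hf : AEStronglyMeasurable f μ)
    (hpos : ∫⁻ x, ENNReal.ofReal (f x) ∂μ ≠ ∞) (hneg : ∫⁻ x, ENNReal.ofReal (-f x) ∂μ ≠ ∞) :
    Integrable f μ := by
  refine ⟨hf, ?_⟩
  have : ∫⁻ x, ‖f x‖ₑ ∂μ = ∫⁻ x, ENNReal.ofReal (f x) ∂μ + ∫⁻ x, ENNReal.ofReal (-f x) ∂μ := by
    simp_rw [← ENNReal.ofReal_add_ofReal_neg]
    exact lintegral_add_left' hf.aemeasurable.ennreal_ofReal _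
  simpa [HasFiniteIntegral, this, lt_top_iff_ne_top] using ⟨hpos, hneg⟩

lemma integrable_left_of_integrable_add (hfg : Integrable (f + g) μ)
    (hf : AEStronglyMeasurable f μ) (hf_neg : ∫⁻ x, ENNReal.ofReal (-f x) ∂μ ≠ ∞)
    (hg_neg : ∫⁻ x, ENNReal.ofReal (-g x) ∂μ ≠ ∞) : Integrable f μ := by
  have hf_pos : ∫⁻ x, ENNReal.ofReal (f x) ∂μ
      ≤ ∫⁻ x, ENNReal.ofReal ((f + g) x) ∂μ + ∫⁻ x, ENNReal.ofReal (-g x) ∂μ := by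
    refine (lintegral_mono fun x => ?_).trans
      (lintegral_add_left' hfg.1.aemeasurable.ennreal_ofReal _).le
    exact (ENNReal.ofReal_le_ofReal (by simp)).trans ENNReal.ofReal_add_le
  refine integrable_of_lintegral_ofReal_ne_top hf (ne_top_of_le_ne_top ?_ hf_pos) hf_neg
  exact ENNReal.add_ne_top.2 ⟨((lintegral_ofReal_le_lintegral_enorm _).trans_lt hfg.2).ne, hg_neg⟩

end Integrability

section LogLikelihoodRatio

variable {α : Type*} [MeasurableSpace α] {ρ η σ : Measure α}

lemma integral_llr_nonneg [IsProbabilityMeasure ρ] [IsProbabilityMeasure σ] (h : ρ ≪ σ)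
    (h_int : Integrable (llr ρ σ) ρ) : 0 ≤ ∫ x, llr ρ σ x ∂ρ := by
  simpa using InformationTheory.integral_llr_add_sub_measure_univ_nonneg h h_int

lemma lintegral_ofReal_neg_llr_le [SigmaFinite ρ] [SigmaFinite σ] (h : ρ ≪ σ) :
    ∫⁻ x, ENNReal.ofReal (-llr ρ σ x) ∂ρ ≤ σ Set.univ := by
  calc ∫⁻ x, ENNReal.ofReal (-llr ρ σ x) ∂ρ
      ≤ ∫⁻ x, ENNReal.ofReal (Real.exp (-llr ρ σ x)) ∂ρ := by
        gcongr with x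
        linarith [Real.add_one_le_exp (-llr ρ σ x)]
    _ = ∫⁻ x, σ.rnDeriv ρ x ∂ρ := by
        refine lintegral_congr_ae ?_
        filter_upwards [exp_neg_llr h, Measure.rnDeriv_lt_top σ ρ] with x hx hlt
        rw [hx, ENNReal.ofReal_toReal hlt.ne]
    _ ≤ σ Set.univ := Measure.lintegral_rnDeriv_le

lemma lintegral_ofReal_neg_llr_le_lintegral_ofReal_llr [IsProbabilityMeasure ρ]
    [IsProbabilityMeasure σ] (h : ρ ≪ σ) :
    ∫⁻ x, ENNReal.ofReal (-llr ρ σ x) ∂ρ ≤ ∫⁻ x, ENNReal.ofReal (llr ρ σ x) ∂ρ := by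
  by_cases hpos : ∫⁻ x, ENNReal.ofReal (llr ρ σ x) ∂ρ = ∞
  · simp [hpos]
  have hneg : ∫⁻ x, ENNReal.ofReal (-llr ρ σ x) ∂ρ ≠ ∞ :=
    ne_top_of_le_ne_top (by simp) (lintegral_ofReal_neg_llr_le h)
  have h_int : Integrable (llr ρ σ) ρ :=
    integrable_of_lintegral_ofReal_ne_top (measurable_llr ρ σ).aestronglyMeasurable hpos hneg
  have h_gibbs := integral_llr_nonneg h h_int
  rw [integral_eq_lintegral_pos_part_sub_lintegral_neg_part h_int, sub_nonneg] at h_gibbs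
  exact (ENNReal.toReal_le_toReal hneg hpos).1 h_gibbs

lemma llr_ae_eq_llr_add_llr [SigmaFinite ρ] [SigmaFinite η] [SigmaFinite σ] (hρη : ρ ≪ η)
    (hησ : η ≪ σ) : llr ρ σ =ᵐ[ρ] llr ρ η + llr η σ := by
  filter_upwards [(hρη.trans hησ).ae_le (Measure.rnDeriv_mul_rnDeriv hρη),
    Measure.rnDeriv_pos hρη, hρη.ae_le (Measure.rnDeriv_lt_top ρ η),
    hρη.ae_le (Measure.rnDeriv_pos hησ), (hρη.trans hησ).ae_le (Measure.rnDeriv_lt_top η σ)]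
    with x hmul hρη_pos hρη_lt hησ_pos hησ_lt
  rw [Pi.add_apply, llr, llr, llr, ← hmul, Pi.mul_apply, ENNReal.toReal_mul,
    Real.log_mul (ENNReal.toReal_pos hρη_pos.ne' hρη_lt.ne).ne'
      (ENNReal.toReal_pos hησ_pos.ne' hησ_lt.ne).ne']

lemma absolutelyContinuous_of_measure_rnDeriv_eq_zero [SigmaFinite η] [SigmaFinite σ]
    (hρσ : ρ ≪ σ) (hησ : η ≪ σ) (h_zero : ρ {x | η.rnDeriv σ x = 0} = 0) : ρ ≪ η := by
  refine Measure.AbsolutelyContinuous.mk fun s hs hηs => ?_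
  rw [← Measure.withDensity_rnDeriv_eq η σ hησ, withDensity_apply _ hs,
    setLIntegral_eq_zero_iff hs (Measure.measurable_rnDeriv η σ)] at hηs
  rw [measure_eq_zero_iff_ae_notMem] at h_zero ⊢
  filter_upwards [hρσ.ae_le hηs, h_zero] with x hs_zero hx_zero hxs
  exact hx_zero (hs_zero hxs)

end LogLikelihoodRatio

lemma measurable_map_of_measurable_uncurry {Ω M N : Type*} [MeasurableSpace Ω] [MeasurableSpace M]
    [MeasurableSpace N] {f : Ω → M → N} (hf : Measurable (Function.uncurry f)) (ν : Measure M)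
    [SFinite ν] : Measurable fun ω => ν.map (f ω) := by
  have h_eq : (fun ω => ν.map (f ω)) = fun ω => (ν.map (Prod.mk ω)).map (Function.uncurry f) :=
    funext fun ω => by rw [Measure.map_map hf measurable_prodMk_left]; rfl
  rw [h_eq]
  exact (Measure.measurable_map _ hf).comp Measurable.map_prodMk_left

lemma ae_measure_eq_zero_of_bind_eq_zero {Ω α : Type*} [MeasurableSpace Ω] [MeasurableSpace α]
    {μ : Measure Ω} {κ : Ω → Measure α} (hκ : Measurable κ) {s : Set α} (hs : MeasurableSet s)
    (h : μ.bind κ s = 0) : ∀ᵐ ω ∂μ, κ ω s = 0 := by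
  have hκs : Measurable fun ω => κ ω s := (Measure.measurable_coe hs).comp hκ
  rwa [Measure.bind_apply hs hκ.aemeasurable, lintegral_eq_zero_iff hκs] at h

namespace RMP

section KullbackLeibler

variable {α : Type*} [MeasurableSpace α] {ρ η σ : Measure α}

lemma klDiv_of_ac_of_integrable (h : ρ ≪ σ) (h_int : Integrable (llr ρ σ) ρ) :
    klDiv ρ σ = ENNReal.ofReal (∫ x, llr ρ σ x ∂ρ) :=
  if_pos ⟨h, h_int⟩

lemma klDiv_of_not_ac (h : ¬ ρ ≪ σ) : klDiv ρ σ = ∞ :=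
  if_neg fun h' => h h'.1

lemma klDiv_ne_top_iff : klDiv ρ σ ≠ ∞ ↔ ρ ≪ σ ∧ Integrable (llr ρ σ) ρ := by
  unfold klDiv
  split_ifs with h <;> simp_all [llr_def]

lemma klDiv_add_lintegral_ofReal_llr_le [IsProbabilityMeasure ρ] [IsProbabilityMeasure η]
    [SigmaFinite σ] (hησ : η ≪ σ) (h_zero : ρ {x | η.rnDeriv σ x = 0} = 0)
    (h_neg : ∫⁻ x, ENNReal.ofReal (-llr η σ x) ∂ρ ≠ ∞) :
    klDiv ρ η + ∫⁻ x, ENNReal.ofReal (llr η σ x) ∂ρ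
      ≤ klDiv ρ σ + ∫⁻ x, ENNReal.ofReal (-llr η σ x) ∂ρ := by
  by_cases hρσ_top : klDiv ρ σ = ∞
  · simp [hρσ_top]
  obtain ⟨hρσ, hρσ_int⟩ := klDiv_ne_top_iff.1 hρσ_top
  have hρη : ρ ≪ η := absolutelyContinuous_of_measure_rnDeriv_eq_zero hρσ hησ h_zero
  have h_chain := llr_ae_eq_llr_add_llr hρη hησ
  have hρη_neg : ∫⁻ x, ENNReal.ofReal (-llr ρ η x) ∂ρ ≠ ∞ :=
    ne_top_of_le_ne_top (by simp) (lintegral_ofReal_neg_llr_le hρη)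
  have h_sum_int : Integrable (llr ρ η + llr η σ) ρ := hρσ_int.congr h_chain
  have hρη_int : Integrable (llr ρ η) ρ := integrable_left_of_integrable_add h_sum_int
    (measurable_llr ρ η).aestronglyMeasurable hρη_neg h_neg
  have hL_int : Integrable (llr η σ) ρ := integrable_left_of_integrable_add
    (add_comm (llr ρ η) (llr η σ) ▸ h_sum_int) (measurable_llr η σ).aestronglyMeasurable
    h_neg hρη_neg
  set P := ∫⁻ x, ENNReal.ofReal (llr η σ x) ∂ρ
  set N := ∫⁻ x, ENNReal.ofReal (-llr η σ x) ∂ρ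
  have hP : P ≠ ∞ := ((lintegral_ofReal_le_lintegral_enorm _).trans_lt hL_int.2).ne
  have h_integral : ∫ x, llr ρ σ x ∂ρ = ∫ x, llr ρ η x ∂ρ + (P.toReal - N.toReal) := by
    rw [integral_congr_ae h_chain, ← integral_eq_lintegral_pos_part_sub_lintegral_neg_part hL_int]
    exact integral_add hρη_int hL_int
  rw [klDiv_of_ac_of_integrable hρη hρη_int, klDiv_of_ac_of_integrable hρσ hρσ_int, h_integral]
  calc ENNReal.ofReal (∫ x, llr ρ η x ∂ρ) + P
      = ENNReal.ofReal (∫ x, llr ρ η x ∂ρ + (P.toReal - N.toReal) + N.toReal) := by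
        rw [add_assoc, sub_add_cancel, ENNReal.ofReal_add (integral_llr_nonneg hρη hρη_int)
          ENNReal.toReal_nonneg, ENNReal.ofReal_toReal hP]
    _ ≤ ENNReal.ofReal (∫ x, llr ρ η x ∂ρ + (P.toReal - N.toReal)) + ENNReal.ofReal N.toReal :=
        ENNReal.ofReal_add_le
    _ = ENNReal.ofReal (∫ x, llr ρ η x ∂ρ + (P.toReal - N.toReal)) + N := by
        rw [ENNReal.ofReal_toReal h_neg]

end KullbackLeibler

section Mixture

variable {Ω α : Type*} [MeasurableSpace Ω] [MeasurableSpace α] {μ : Measure Ω}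
  {κ : Ω → Measure α} {σ : Measure α}

lemma bind_absolutelyContinuous_of_lintegral_klDiv_ne_top
    (h : ∫⁻ ω, klDiv (κ ω) σ ∂μ ≠ ∞) : μ.bind κ ≪ σ := by
  refine Measure.AbsolutelyContinuous.mk fun s hs hσs => ?_
  have h_top_mul : ∀ ω, ∞ * κ ω s ≤ klDiv (κ ω) σ := fun ω => by
    by_cases hκs : κ ω s = 0
    · simp [hκs]
    · rw [klDiv_of_not_ac fun hκσ => hκs (hκσ hσs)]
      exact le_top
  have h_mass : ∫⁻ ω, κ ω s ∂μ = 0 := by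
    by_contra h_ne
    refine h (eq_top_iff.2 ?_)
    calc ∞ = ∞ * ∫⁻ ω, κ ω s ∂μ := (ENNReal.top_mul h_ne).symm
      _ ≤ ∫⁻ ω, ∞ * κ ω s ∂μ := lintegral_const_mul_le _ _
      _ ≤ ∫⁻ ω, klDiv (κ ω) σ ∂μ := lintegral_mono h_top_mul
  exact nonpos_iff_eq_zero.1 (le_of_le_of_eq (Measure.bind_apply_le κ hs) h_mass)

lemma lintegral_klDiv_bind_add_le [IsProbabilityMeasure (μ.bind κ)]
    [∀ ω, IsProbabilityMeasure (κ ω)] [IsFiniteMeasure σ] (hκ : Measurable κ)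
    (hσ : μ.bind κ ≪ σ) :
    ∫⁻ ω, klDiv (κ ω) (μ.bind κ) ∂μ + ∫⁻ x, ENNReal.ofReal (llr (μ.bind κ) σ x) ∂μ.bind κ
      ≤ ∫⁻ ω, klDiv (κ ω) σ ∂μ + ∫⁻ x, ENNReal.ofReal (-llr (μ.bind κ) σ x) ∂μ.bind κ := by
  set η := μ.bind κ
  have hL : Measurable (llr η σ) := measurable_llr η σ
  have hP_inner : Measurable fun ω => ∫⁻ x, ENNReal.ofReal (llr η σ x) ∂κ ω :=
    (Measure.measurable_lintegral hL.ennreal_ofReal).comp hκ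
  have hN_inner : Measurable fun ω => ∫⁻ x, ENNReal.ofReal (-llr η σ x) ∂κ ω :=
    (Measure.measurable_lintegral hL.neg.ennreal_ofReal).comp hκ
  have hP_bind : ∫⁻ x, ENNReal.ofReal (llr η σ x) ∂η
      = ∫⁻ ω, ∫⁻ x, ENNReal.ofReal (llr η σ x) ∂κ ω ∂μ :=
    Measure.lintegral_bind hκ.aemeasurable hL.ennreal_ofReal.aemeasurable
  have hN_bind : ∫⁻ x, ENNReal.ofReal (-llr η σ x) ∂η
      = ∫⁻ ω, ∫⁻ x, ENNReal.ofReal (-llr η σ x) ∂κ ω ∂μ :=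
    Measure.lintegral_bind hκ.aemeasurable hL.neg.ennreal_ofReal.aemeasurable
  have hN : ∫⁻ x, ENNReal.ofReal (-llr η σ x) ∂η ≠ ∞ :=
    ne_top_of_le_ne_top (measure_ne_top σ _) (lintegral_ofReal_neg_llr_le hσ)
  have h_neg_ae : ∀ᵐ ω ∂μ, ∫⁻ x, ENNReal.ofReal (-llr η σ x) ∂κ ω ≠ ∞ :=
    (ae_lt_top hN_inner (hN_bind ▸ hN)).mono fun _ h => h.ne
  have h_zero_ae : ∀ᵐ ω ∂μ, κ ω {x | η.rnDeriv σ x = 0} = 0 :=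
    ae_measure_eq_zero_of_bind_eq_zero hκ
      (Measure.measurable_rnDeriv η σ (measurableSet_singleton 0))
      (measure_eq_zero_iff_ae_notMem.2 ((Measure.rnDeriv_pos hσ).mono fun _ h => h.ne'))
  rw [hP_bind, hN_bind, ← lintegral_add_right _ hP_inner, ← lintegral_add_right _ hN_inner]
  exact lintegral_mono_ae ((h_zero_ae.and h_neg_ae).mono fun ω h =>
    klDiv_add_lintegral_ofReal_llr_le hσ h.1 h.2)

theorem lintegral_klDiv_bind_le [IsProbabilityMeasure μ] [∀ ω, IsProbabilityMeasure (κ ω)]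
    [IsProbabilityMeasure σ] (hκ : Measurable κ) :
    ∫⁻ ω, klDiv (κ ω) (μ.bind κ) ∂μ ≤ ∫⁻ ω, klDiv (κ ω) σ ∂μ := by
  have : IsProbabilityMeasure (μ.bind κ) :=
    isProbabilityMeasure_bind hκ.aemeasurable (ae_of_all _ inferInstance)
  by_cases h_top : ∫⁻ ω, klDiv (κ ω) σ ∂μ = ∞
  · simp [h_top]
  have hσ : μ.bind κ ≪ σ := bind_absolutelyContinuous_of_lintegral_klDiv_ne_top h_top
  have h_add := lintegral_klDiv_bind_add_le hκ hσ
  have hN : ∫⁻ x, ENNReal.ofReal (-llr (μ.bind κ) σ x) ∂μ.bind κ ≠ ∞ :=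
    ne_top_of_le_ne_top (by simp) (lintegral_ofReal_neg_llr_le hσ)
  have hP : ∫⁻ x, ENNReal.ofReal (llr (μ.bind κ) σ x) ∂μ.bind κ ≠ ∞ :=
    ne_top_of_le_ne_top (ENNReal.add_ne_top.2 ⟨h_top, hN⟩) (le_add_self.trans h_add)
  exact (ENNReal.add_le_add_iff_right hP).1
    (h_add.trans (add_le_add le_rfl (lintegral_ofReal_neg_llr_le_lintegral_ofReal_llr hσ)))

end Mixture

end RMP

/-- Among all probability measures `ν'` on `N`, the mean relative entropy
`Φ_μ(ν | ν')` is minimized by the mean push-forward `ν' = μ ∗ ν`. -/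
theorem stmt2 {Ω M N : Type*} [MeasurableSpace Ω] [MeasurableSpace M] [MeasurableSpace N]
    (μ : Measure Ω) [IsProbabilityMeasure μ]
    (f : Ω → M → N) (hf : Measurable (Function.uncurry f))
    (ν : Measure M) [IsProbabilityMeasure ν]
    (ν' : Measure N) [IsProbabilityMeasure ν'] :
    RMP.meanRelEnt μ f ν (RMP.mpush μ f ν) ≤ RMP.meanRelEnt μ f ν ν' := by
  have : ∀ ω, IsProbabilityMeasure (ν.map (f ω)) :=
    fun ω => Measure.isProbabilityMeasure_map hf.of_uncurry_left.aemeasurable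
  exact RMP.lintegral_klDiv_bind_le (measurable_map_of_measurable_uncurry hf ν)
end

section
/- Let (Ω, ℙ) be a probability space, M > 0, and let X : Ω → ℝ be a random variable satisfying 0 ≤ X ≤ M almost surely and E[X] = 1. Then E[X log X] ≥ Var(X)/(2M), where Var(X) = E[(X − 1)²] and x log x is interpreted as 0 at x = 0. -/
open MeasureTheory

/-!
Pointwise, `x log x ≥ (x - 1) + (x - 1)² / (2M)` on `[0, M]` once `M ≥ 1`, which is forced by
`E[X] = 1`. Integrating and using `E[X - 1] = 0` gives the claim. The pointwise bound follows from
the two classical estimates `2(t - 1)/(t + 1) ≤ log t ≤ (t - t⁻¹)/2` for `t ≥ 1`, applied to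
`t = x` when `x ≥ 1` and to `t = x⁻¹` when `x ≤ 1`.
-/

namespace Real

/-- The substitution `s = (t - 1)/(t + 1)` turns the partial-sum bounds on `½ log ((1 + s)/(1 - s))`
into bounds on `log t`. -/
lemma one_add_div_one_sub_of_one_le {t : ℝ} (ht : 1 ≤ t) :
    let s := (t - 1) / (t + 1)
    0 ≤ s ∧ s < 1 ∧ (1 + s) / (1 - s) = t := by
  have hpos : 0 < t + 1 := by linarith
  refine ⟨div_nonneg (by linarith) hpos.le, (div_lt_one hpos).2 (by linarith), ?_⟩
  field_simp
  ring

lemma two_mul_sub_one_div_add_one_le_log {t : ℝ} (ht : 1 ≤ t) :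
    2 * (t - 1) / (t + 1) ≤ log t := by
  obtain ⟨hs0, hs1, hst⟩ := one_add_div_one_sub_of_one_le ht
  have h := sum_range_le_log_div hs0 hs1 1
  rw [hst] at h
  norm_num at h
  rw [mul_div_assoc]
  linarith

lemma log_le_sub_inv_div_two {t : ℝ} (ht : 1 ≤ t) : log t ≤ (t - t⁻¹) / 2 := by
  obtain ⟨hs0, hs1, hst⟩ := one_add_div_one_sub_of_one_le ht
  have h := log_div_le_sum_range_add hs0 hs1 0
  rw [hst] at h
  have ht0 : 0 < t := by linarith
  have hden : 0 < t + 1 := by linarith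
  have hval : (t - 1) / (t + 1) / (1 - ((t - 1) / (t + 1)) ^ 2) = (t - t⁻¹) / 4 := by
    field_simp
    ring_nf
    field_simp
  norm_num [hval] at h
  linarith

lemma sub_one_add_sq_div_two_le_mul_log {x : ℝ} (hx0 : 0 ≤ x) (hx1 : x ≤ 1) :
    (x - 1) + (x - 1) ^ 2 / 2 ≤ x * log x := by
  rcases hx0.eq_or_lt with rfl | hx0
  · norm_num
  have hlog : (x - x⁻¹) / 2 ≤ log x := by
    have h := log_le_sub_inv_div_two ((one_le_inv₀ hx0).2 hx1)
    rw [log_inv, inv_inv] at h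
    linarith
  calc (x - 1) + (x - 1) ^ 2 / 2 = x * ((x - x⁻¹) / 2) := by field_simp; ring
    _ ≤ x * log x := mul_le_mul_of_nonneg_left hlog hx0.le

lemma sub_one_add_sq_div_two_mul_le_mul_log {x : ℝ} (hx : 1 ≤ x) :
    (x - 1) + (x - 1) ^ 2 / (2 * x) ≤ x * log x := by
  have hx0 : 0 < x := by linarith
  calc (x - 1) + (x - 1) ^ 2 / (2 * x) ≤ x * (2 * (x - 1) / (x + 1)) := by
        rw [← sub_nonneg]
        have key : x * (2 * (x - 1) / (x + 1)) - ((x - 1) + (x - 1) ^ 2 / (2 * x))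
            = (x - 1) ^ 3 / (2 * x * (x + 1)) := by
          field_simp
          ring
        rw [key]
        have : 0 ≤ x - 1 := by linarith
        positivity
    _ ≤ x * log x := mul_le_mul_of_nonneg_left (two_mul_sub_one_div_add_one_le_log hx) hx0.le

lemma sub_one_add_sq_div_le_mul_log {M x : ℝ} (hM : 1 ≤ M) (hx0 : 0 ≤ x) (hxM : x ≤ M) :
    (x - 1) + (x - 1) ^ 2 / (2 * M) ≤ x * log x := by
  rcases le_total x 1 with hx1 | hx1
  · have : (x - 1) ^ 2 / (2 * M) ≤ (x - 1) ^ 2 / 2 :=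
      div_le_div_of_nonneg_left (sq_nonneg _) two_pos (by linarith)
    linarith [sub_one_add_sq_div_two_le_mul_log hx0 hx1]
  · have : (x - 1) ^ 2 / (2 * M) ≤ (x - 1) ^ 2 / (2 * x) :=
      div_le_div_of_nonneg_left (sq_nonneg _) (by linarith) (by linarith)
    linarith [sub_one_add_sq_div_two_mul_le_mul_log hx1]

end Real

lemma MeasureTheory.AEStronglyMeasurable.integrable_comp_of_ae_mem_Icc {Ω : Type*}
    [MeasurableSpace Ω] {μ : Measure Ω} [IsFiniteMeasure μ] {X : Ω → ℝ} (hX : AEStronglyMeasurable X μ)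
    {a b : ℝ} (hab : ∀ᵐ ω ∂μ, X ω ∈ Set.Icc a b) {g : ℝ → ℝ} (hg : Continuous g) :
    Integrable (fun ω ↦ g (X ω)) μ := by
  obtain ⟨C, hC⟩ := isCompact_Icc.exists_bound_of_continuousOn hg.continuousOn
  exact .of_bound (hg.comp_aestronglyMeasurable hX) C (hab.mono fun ω hω ↦ hC _ hω)

theorem stmt5_general {Ω : Type*} [MeasurableSpace Ω] (Pr : Measure Ω) [IsProbabilityMeasure Pr]
    (M : ℝ) (X : Ω → ℝ)
    (hbd : ∀ᵐ ω ∂Pr, 0 ≤ X ω ∧ X ω ≤ M)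
    (hmean : ∫ ω, X ω ∂Pr = 1) :
    (∫ ω, (X ω - 1) ^ 2 ∂Pr) / (2 * M) ≤ ∫ ω, X ω * Real.log (X ω) ∂Pr := by
  have hX : Integrable X Pr := .of_integral_ne_zero (by simp [hmean])
  have hM : 1 ≤ M := by
    simpa [hmean] using integral_mono_ae hX (integrable_const M) (hbd.mono fun ω h ↦ h.2)
  have hIcc : ∀ᵐ ω ∂Pr, X ω ∈ Set.Icc 0 M := hbd
  have hsq := hX.1.integrable_comp_of_ae_mem_Icc hIcc (g := fun x ↦ (x - 1) ^ 2) (by fun_prop)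
  have hlog := hX.1.integrable_comp_of_ae_mem_Icc hIcc Real.continuous_mul_log
  have hlin : Integrable (fun ω ↦ X ω - 1) Pr := hX.sub (integrable_const 1)
  calc (∫ ω, (X ω - 1) ^ 2 ∂Pr) / (2 * M)
      = ∫ ω, (X ω - 1) + (X ω - 1) ^ 2 / (2 * M) ∂Pr := by
        rw [integral_add hlin (hsq.div_const _), integral_sub hX (integrable_const 1),
          integral_div, hmean]
        simp
    _ ≤ ∫ ω, X ω * Real.log (X ω) ∂Pr :=
        integral_mono_ae (hlin.add (hsq.div_const _)) hlog
          (hbd.mono fun ω h ↦ Real.sub_one_add_sq_div_le_mul_log hM h.1 h.2)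

/-- If `0 ≤ X ≤ M` almost surely and `E[X] = 1`, then
`E[X log X] ≥ Var(X) / (2M)`, where `Var(X) = E[(X − 1)²]`. -/
theorem stmt5 {Ω : Type*} [MeasurableSpace Ω] (Pr : Measure Ω) [IsProbabilityMeasure Pr]
    (M : ℝ) (hM : 0 < M) (X : Ω → ℝ) (hX : Measurable X)
    (hbd : ∀ᵐ ω ∂Pr, 0 ≤ X ω ∧ X ω ≤ M)
    (hmean : ∫ ω, X ω ∂Pr = 1) :
    (∫ ω, (X ω - 1) ^ 2 ∂Pr) / (2 * M) ≤ ∫ ω, X ω * Real.log (X ω) ∂Pr :=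
  stmt5_general Pr M X hbd hmean
end

section
/- Fix d ≥ 1, 1 ≤ k ≤ d, and L > 0. There exist constants C > 0 and ε₀ > 0 such that for every probability measure μ ∈ 𝓜_L on d×d real matrices, every orthonormal family v_1, …, v_k of vectors in ℝ^d, and every 0 < ε < ε₀: |∫ (1/2) log det G_ε(E) dμ(E) − k(d−k−1)ε²/2| ≤ C ε³, where G_ε(E) is the k×k matrix with entries G_ε(E)_{ij} = ⟨(I + εE)v_i, (I + εE)v_j⟩ for 1 ≤ i, j ≤ k. Equivalently, ∫ log ‖(I+εE)(v_1 ∧ ⋯ ∧ v_k)‖ dμ(E) = k(d−k−1)ε²/2 + O(ε³) uniformly over unit-norm rank-one elements v_1 ∧ ⋯ ∧ v_k of the k-th exterior power of ℝ^d. -/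
open MeasureTheory ProbabilityTheory Filter Matrix

namespace RMP

noncomputable instance {d : ℕ} : MeasureSpace (Matrix (Fin d) (Fin d) ℝ) :=
  inferInstanceAs (MeasureSpace (Fin d → Fin d → ℝ))

/-- The operator norm of a `d × d` real matrix, acting on Euclidean space. -/
noncomputable def opNorm {d : ℕ} (A : Matrix (Fin d) (Fin d) ℝ) : ℝ :=
  ‖LinearMap.toContinuousLinearMap (Matrix.toEuclideanLin A)‖

/-- The list of singular values of `A` (square roots of the eigenvalues of `Aᵀ A`),
sorted in increasing order. -/
noncomputable def svList {d : ℕ} (A : Matrix (Fin d) (Fin d) ℝ) : List ℝ :=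
  (Multiset.map Real.sqrt
    (Multiset.map (show (Aᵀ * A).IsHermitian by
      rw [Matrix.IsHermitian, Matrix.conjTranspose_eq_transpose_of_trivial, Matrix.transpose_mul,
        Matrix.transpose_transpose]).eigenvalues Finset.univ.val)).sort
    (· ≤ ·)

/-- `singVal A k`: the `k`-th largest singular value of `A` (for `1 ≤ k ≤ d`), i.e. the
square root of the `k`-th largest eigenvalue of `Aᵀ A`. -/
noncomputable def singVal {d : ℕ} (A : Matrix (Fin d) (Fin d) ℝ) (k : ℕ) : ℝ :=
  (svList A).getD (d - k) 0

/-- `revProd M n = M (n-1) * ⋯ * M 1 * M 0`. -/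
noncomputable def revProd {d : ℕ} (M : ℕ → Matrix (Fin d) (Fin d) ℝ) (n : ℕ) :
    Matrix (Fin d) (Fin d) ℝ :=
  (List.range n).foldl (fun P i => M i * P) 1

end RMP

namespace RMP

/-- The class `𝓜_L` of probability measures on `d × d` matrices: supported on the operator-norm
ball of radius `L`, with centered entries and identity-covariance structure
`∫ E_{ij} E_{kl} dμ = δ_{ik} δ_{jl}`. -/
def memML (d : ℕ) (L : ℝ) (μ : MeasureTheory.Measure (Matrix (Fin d) (Fin d) ℝ)) : Prop :=
  MeasureTheory.IsProbabilityMeasure μ ∧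
  μ {E | opNorm E ≤ L} = 1 ∧
  (∀ i j : Fin d, ∫ E, E i j ∂μ = 0) ∧
  (∀ i j k l : Fin d, ∫ E, E i j * E k l ∂μ = if i = k ∧ j = l then 1 else 0)

end RMP

/-!
Write `G_ε(E) = 1 + H` with `H = ε A + ε² B`, where `A_ij = ⟨E vᵢ, vⱼ⟩ + ⟨E vⱼ, vᵢ⟩` and
`B_ij = ⟨E vᵢ, E vⱼ⟩`. On the support of `μ` the entries of `A` and `B` are `O(L + L²)`, so
diagonalizing the symmetric matrix `H` gives, uniformly in `E`,
`½ log det (1 + H) = ½ tr H - ¼ tr H² + O(ε³) = ½ ε tr A + ½ ε² tr B - ¼ ε² tr A² + O(ε³)`.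
Only second moments of `μ` enter the right-hand side: `𝔼 tr A = 0`, `𝔼 tr B = k d` and
`𝔼 tr A² = 2k² + 2k`, which gives the main term `k (d - k - 1) ε² / 2`.
-/

lemma Real.abs_log_one_add_sub_le {y : ℝ} (hy : |y| ≤ 1 / 2) :
    |Real.log (1 + y) - y + y ^ 2 / 2| ≤ 2 * |y| ^ 3 := by
  have h := Real.abs_log_sub_add_sum_range_le (x := -y) (by rw [abs_neg]; linarith) 2
  simp only [Finset.sum_range_succ, Finset.sum_range_zero, abs_neg, sub_neg_eq_add] at h
  calc |Real.log (1 + y) - y + y ^ 2 / 2| ≤ |y| ^ 3 / (1 - |y|) := by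
        convert h using 2; push_cast; ring
    _ ≤ 2 * |y| ^ 3 := by
        rw [div_le_iff₀ (by linarith)]
        nlinarith [pow_nonneg (abs_nonneg y) 3]

lemma EuclideanSpace.norm_toLp_eq_one {n : Type*} [Fintype n] {x : n → ℝ} (hx : x ⬝ᵥ x = 1) :
    ‖(WithLp.toLp 2 x : EuclideanSpace ℝ n)‖ = 1 := by
  have h := real_inner_self_eq_norm_sq (WithLp.toLp 2 x : EuclideanSpace ℝ n)
  rw [EuclideanSpace.inner_toLp_toLp, star_trivial, hx] at h
  exact (pow_eq_one_iff_of_nonneg (norm_nonneg _) two_ne_zero).mp h.symm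

lemma MeasureTheory.abs_integral_sub_integral_le {α : Type*} [MeasurableSpace α]
    {μ : Measure α} [IsProbabilityMeasure μ] {f g : α → ℝ} {c : ℝ}
    (hf : AEStronglyMeasurable f μ) (hg : Integrable g μ) (hfg : ∀ᵐ x ∂μ, |f x - g x| ≤ c) :
    |∫ x, f x ∂μ - ∫ x, g x ∂μ| ≤ c := by
  have hsub : Integrable (f - g) μ :=
    Integrable.of_bound (hf.sub hg.aestronglyMeasurable) c (by simpa using hfg)
  rw [← integral_sub (by simpa using hsub.add hg) hg]
  simpa using norm_integral_le_of_norm_le_const (f := fun x => f x - g x) hfg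

namespace Matrix

variable {n : Type*} [Fintype n]

lemma abs_dotProduct_le (x y : n → ℝ) :
    |x ⬝ᵥ y| ≤ ‖(WithLp.toLp 2 x : EuclideanSpace ℝ n)‖ *
      ‖(WithLp.toLp 2 y : EuclideanSpace ℝ n)‖ := by
  have h := abs_real_inner_le_norm (WithLp.toLp 2 y : EuclideanSpace ℝ n) (WithLp.toLp 2 x)
  rwa [EuclideanSpace.inner_toLp_toLp, star_trivial, mul_comm] at h

lemma abs_trace_mul_le {X Y : Matrix n n ℝ} {a b : ℝ} (hX : ∀ i j, |X i j| ≤ a)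
    (hY : ∀ i j, |Y i j| ≤ b) : |(X * Y).trace| ≤ Fintype.card n ^ 2 * (a * b) := by
  calc |(X * Y).trace| = |∑ i, ∑ j, X i j * Y j i| := by simp [trace, mul_apply]
    _ ≤ ∑ i, ∑ j, |X i j * Y j i| :=
        (Finset.abs_sum_le_sum_abs _ _).trans (Finset.sum_le_sum fun _ _ =>
          Finset.abs_sum_le_sum_abs _ _)
    _ ≤ ∑ _i : n, ∑ _j : n, a * b := by
        gcongr with i _ j _
        rw [abs_mul]
        exact mul_le_mul (hX i j) (hY j i) (abs_nonneg _) ((abs_nonneg _).trans (hX i j))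
    _ = Fintype.card n ^ 2 * (a * b) := by simp [sq, mul_assoc]

/-- The second-order Taylor polynomial in `ε` of `(1/2) log det (1 + ε A + ε² B)`. -/
noncomputable def halfLogDetApprox (ε : ℝ) (A B : Matrix n n ℝ) : ℝ :=
  (ε * A.trace + ε ^ 2 * B.trace) / 2 - ε ^ 2 * (A * A).trace / 4

variable [DecidableEq n]

lemma trace_conjStarAlgAut (U : unitary (Matrix n n ℝ)) (X : Matrix n n ℝ) :
    (Unitary.conjStarAlgAut ℝ _ U X).trace = X.trace := by
  rw [Unitary.conjStarAlgAut_apply, trace_mul_cycle, Unitary.coe_star_mul_self, one_mul]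

lemma det_conjStarAlgAut (U : unitary (Matrix n n ℝ)) (X : Matrix n n ℝ) :
    (Unitary.conjStarAlgAut ℝ _ U X).det = X.det :=
  det_conj_of_mul_eq_one (Unitary.coe_mul_star_self U) (Unitary.coe_star_mul_self U)

lemma IsHermitian.abs_log_det_one_add_sub_le {H : Matrix n n ℝ} (hH : H.IsHermitian)
    {δ : ℝ} (hδ0 : 0 ≤ δ) (hδ : δ ≤ 1 / 2) (hHH : (H * H).trace ≤ δ ^ 2) :
    |Real.log (1 + H).det - H.trace + (H * H).trace / 2| ≤ 2 * Fintype.card n * δ ^ 3 := by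
  set f := hH.eigenvalues
  set φ := Unitary.conjStarAlgAut ℝ _ hH.eigenvectorUnitary
  have hH' : H = φ (diagonal f) := by
    simpa only [RCLike.ofReal_real_eq_id, Function.id_comp] using hH.spectral_theorem
  have htr : H.trace = ∑ i, f i := by rw [hH', trace_conjStarAlgAut, trace_diagonal]
  have hdet : (1 + H).det = ∏ i, (1 + f i) := by
    rw [hH', ← map_one φ, ← map_add, det_conjStarAlgAut, ← diagonal_one, diagonal_add,
      det_diagonal]
  have htr2 : (H * H).trace = ∑ i, f i ^ 2 := by
    rw [hH', ← map_mul, trace_conjStarAlgAut, diagonal_mul_diagonal, trace_diagonal]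
    simp only [sq]
  have hf : ∀ i, |f i| ≤ δ := fun i => abs_le_of_sq_le_sq (le_trans
    (Finset.single_le_sum (fun j _ => sq_nonneg (f j)) (Finset.mem_univ i)) (htr2 ▸ hHH)) hδ0
  have hlog : Real.log (1 + H).det = ∑ i, Real.log (1 + f i) := by
    rw [hdet, Real.log_prod]
    intro i _
    linarith [neg_abs_le (f i), hf i]
  rw [hlog, htr, htr2, Finset.sum_div, ← Finset.sum_sub_distrib, ← Finset.sum_add_distrib]
  calc |∑ i, (Real.log (1 + f i) - f i + f i ^ 2 / 2)|
      ≤ ∑ i, |Real.log (1 + f i) - f i + f i ^ 2 / 2| := Finset.abs_sum_le_sum_abs _ _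
    _ ≤ ∑ _i : n, 2 * δ ^ 3 := by
        gcongr with i
        exact (Real.abs_log_one_add_sub_le ((hf i).trans hδ)).trans (by gcongr; exact hf i)
    _ = 2 * Fintype.card n * δ ^ 3 := by simp; ring

lemma abs_half_log_det_sub_halfLogDetApprox_le {A B : Matrix n n ℝ} (hA : A.IsHermitian)
    (hB : B.IsHermitian) {c ε : ℝ} (hc : 0 ≤ c) (hAc : ∀ i j, |A i j| ≤ c)
    (hBc : ∀ i j, |B i j| ≤ c) (hε0 : 0 ≤ ε) (hε1 : ε ≤ 1)
    (hsmall : Fintype.card n * (2 * ε * c) ≤ 1 / 2) :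
    |1 / 2 * Real.log (1 + (ε • A + ε ^ 2 • B)).det - halfLogDetApprox ε A B|
      ≤ (8 * Fintype.card n ^ 4 * c ^ 3 + Fintype.card n ^ 2 * c ^ 2) * ε ^ 3 := by
  set k : ℝ := (Fintype.card n : ℝ)
  set H := ε • A + ε ^ 2 • B
  have hH : H.IsHermitian := (hA.smul (.all ε)).add (hB.smul (.all _))
  have hHc : ∀ i j, |H i j| ≤ 2 * ε * c := fun i j => by
    simp only [H, add_apply, smul_apply, smul_eq_mul]
    calc |ε * A i j + ε ^ 2 * B i j| ≤ ε * c + ε ^ 2 * c := by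
          refine (abs_add_le _ _).trans ?_
          rw [abs_mul, abs_mul, abs_of_nonneg hε0, abs_of_nonneg (sq_nonneg ε)]
          exact add_le_add (mul_le_mul_of_nonneg_left (hAc i j) hε0)
            (mul_le_mul_of_nonneg_left (hBc i j) (sq_nonneg ε))
      _ ≤ 2 * ε * c := by nlinarith [mul_nonneg hε0 hc]
  have hHH : (H * H).trace ≤ (k * (2 * ε * c)) ^ 2 :=
    (le_abs_self _).trans ((abs_trace_mul_le hHc hHc).trans_eq (by ring))
  have hlog := abs_le.mp (hH.abs_log_det_one_add_sub_le (by positivity) hsmall hHH)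
  have htrH : H.trace = ε * A.trace + ε ^ 2 * B.trace := by
    simp only [H, trace_add, trace_smul, smul_eq_mul]
  have htrHH : (H * H).trace = ε ^ 2 * (A * A).trace
      + ε ^ 3 * ((A * B).trace + (B * A).trace) + ε ^ 4 * (B * B).trace := by
    simp only [H, add_mul, mul_add, smul_mul_smul, trace_add, trace_smul, smul_eq_mul]
    ring
  have hrest : |ε ^ 3 * ((A * B).trace + (B * A).trace) + ε ^ 4 * (B * B).trace|
      ≤ 3 * k ^ 2 * c ^ 2 * ε ^ 3 := by
    have hAB := abs_le.mp (abs_trace_mul_le hAc hBc)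
    have hBA := abs_le.mp (abs_trace_mul_le hBc hAc)
    have hBB := abs_le.mp (abs_trace_mul_le hBc hBc)
    have hε43 : ε ^ 4 ≤ ε ^ 3 := pow_le_pow_of_le_one hε0 hε1 (by norm_num)
    have hkc : 0 ≤ k ^ 2 * c ^ 2 := by positivity
    rw [abs_le]
    constructor <;> nlinarith [pow_nonneg hε0 3, pow_nonneg hε0 4]
  have hsplit : 1 / 2 * Real.log (1 + H).det - halfLogDetApprox ε A B
      = (Real.log (1 + H).det - H.trace + (H * H).trace / 2) / 2
        - (ε ^ 3 * ((A * B).trace + (B * A).trace) + ε ^ 4 * (B * B).trace) / 4 := by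
    rw [halfLogDetApprox, htrHH, htrH]
    ring
  rw [hsplit, abs_le]
  have hrest' := abs_le.mp hrest
  have hk : 0 ≤ k ^ 2 * c ^ 2 * ε ^ 3 := by positivity
  constructor <;> nlinarith

end Matrix

namespace RMP

instance {d : ℕ} : BorelSpace (Matrix (Fin d) (Fin d) ℝ) :=
  inferInstanceAs (BorelSpace (Fin d → Fin d → ℝ))

variable {d k : ℕ}

lemma opNorm_nonneg (E : Matrix (Fin d) (Fin d) ℝ) : 0 ≤ opNorm E := norm_nonneg _

lemma norm_toLp_mulVec_le (E : Matrix (Fin d) (Fin d) ℝ) (x : Fin d → ℝ) :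
    ‖(WithLp.toLp 2 (E *ᵥ x) : EuclideanSpace ℝ (Fin d))‖
      ≤ opNorm E * ‖(WithLp.toLp 2 x : EuclideanSpace ℝ (Fin d))‖ :=
  (LinearMap.toContinuousLinearMap (Matrix.toEuclideanLin E)).le_opNorm _

lemma continuous_opNorm : Continuous fun E : Matrix (Fin d) (Fin d) ℝ => opNorm E :=
  continuous_norm.comp (LinearMap.continuous_of_finiteDimensional
    ((LinearMap.toContinuousLinearMap : _ ≃ₗ[ℝ] _).toLinearMap.comp
      (Matrix.toEuclideanLin (𝕜 := ℝ) (m := Fin d) (n := Fin d)).toLinearMap))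

lemma ae_opNorm_le {L : ℝ} {μ : Measure (Matrix (Fin d) (Fin d) ℝ)} [IsProbabilityMeasure μ]
    (h : μ {E | opNorm E ≤ L} = 1) : ∀ᵐ E ∂μ, opNorm E ≤ L := by
  rw [ae_iff_measure_eq (measurableSet_le continuous_opNorm.measurable
    measurable_const).nullMeasurableSet, h, measure_univ]

def gramLin (v : Fin k → Fin d → ℝ) (E : Matrix (Fin d) (Fin d) ℝ) : Matrix (Fin k) (Fin k) ℝ :=
  of fun i j => (E *ᵥ v i) ⬝ᵥ v j + (E *ᵥ v j) ⬝ᵥ v i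

def gramQuad (v : Fin k → Fin d → ℝ) (E : Matrix (Fin d) (Fin d) ℝ) : Matrix (Fin k) (Fin k) ℝ :=
  of fun i j => (E *ᵥ v i) ⬝ᵥ (E *ᵥ v j)

lemma gram_one_add_smul {v : Fin k → Fin d → ℝ}
    (hv : ∀ i j, v i ⬝ᵥ v j = if i = j then 1 else 0) (ε : ℝ) (E : Matrix (Fin d) (Fin d) ℝ) :
    (of fun i j => ((1 + ε • E) *ᵥ v i) ⬝ᵥ ((1 + ε • E) *ᵥ v j))
      = 1 + (ε • gramLin v E + ε ^ 2 • gramQuad v E) := by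
  ext i j
  simp only [gramLin, gramQuad, of_apply, Matrix.add_apply, Matrix.smul_apply, smul_eq_mul,
    add_mulVec, one_mulVec, smul_mulVec, add_dotProduct, dotProduct_add, smul_dotProduct,
    dotProduct_smul, hv, one_apply]
  rw [dotProduct_comm (v i) (E *ᵥ v j)]
  ring

lemma gramLin_isHermitian (v : Fin k → Fin d → ℝ) (E : Matrix (Fin d) (Fin d) ℝ) :
    (gramLin v E).IsHermitian := by
  ext i j
  simp [gramLin, add_comm]

lemma gramQuad_isHermitian (v : Fin k → Fin d → ℝ) (E : Matrix (Fin d) (Fin d) ℝ) :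
    (gramQuad v E).IsHermitian := by
  ext i j
  simp [gramQuad, dotProduct_comm]

lemma abs_gramLin_apply_le {v : Fin k → Fin d → ℝ} (hv : ∀ i, v i ⬝ᵥ v i = 1)
    (E : Matrix (Fin d) (Fin d) ℝ) (i j : Fin k) : |gramLin v E i j| ≤ 2 * opNorm E := by
  have key : ∀ i j, |(E *ᵥ v i) ⬝ᵥ v j| ≤ opNorm E := fun i j => by
    refine (Matrix.abs_dotProduct_le _ _).trans ?_
    simpa [EuclideanSpace.norm_toLp_eq_one (hv i), EuclideanSpace.norm_toLp_eq_one (hv j)]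
      using norm_toLp_mulVec_le E (v i)
  exact (abs_add_le _ _).trans (by linarith [key i j, key j i])

lemma abs_gramQuad_apply_le {v : Fin k → Fin d → ℝ} (hv : ∀ i, v i ⬝ᵥ v i = 1)
    (E : Matrix (Fin d) (Fin d) ℝ) (i j : Fin k) : |gramQuad v E i j| ≤ opNorm E ^ 2 := by
  have key : ∀ i, ‖(WithLp.toLp 2 (E *ᵥ v i) : EuclideanSpace ℝ (Fin d))‖ ≤ opNorm E :=
    fun i => by simpa [EuclideanSpace.norm_toLp_eq_one (hv i)] using norm_toLp_mulVec_le E (v i)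
  exact (Matrix.abs_dotProduct_le _ _).trans
    (sq (opNorm E) ▸ mul_le_mul (key i) (key j) (norm_nonneg _) (opNorm_nonneg E))

lemma trace_gramLin (v : Fin k → Fin d → ℝ) (E : Matrix (Fin d) (Fin d) ℝ) :
    (gramLin v E).trace = ∑ i, ((E *ᵥ v i) ⬝ᵥ v i + (E *ᵥ v i) ⬝ᵥ v i) := rfl

lemma trace_gramQuad (v : Fin k → Fin d → ℝ) (E : Matrix (Fin d) (Fin d) ℝ) :
    (gramQuad v E).trace = ∑ i, (E *ᵥ v i) ⬝ᵥ (E *ᵥ v i) := rfl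

lemma trace_gramLin_mul_self (v : Fin k → Fin d → ℝ) (E : Matrix (Fin d) (Fin d) ℝ) :
    (gramLin v E * gramLin v E).trace = ∑ i, ∑ j,
      ((E *ᵥ v i) ⬝ᵥ v j + (E *ᵥ v j) ⬝ᵥ v i) * ((E *ᵥ v j) ⬝ᵥ v i + (E *ᵥ v i) ⬝ᵥ v j) := rfl

lemma mulVec_dotProduct_eq_sum (E : Matrix (Fin d) (Fin d) ℝ) (x y : Fin d → ℝ) :
    (E *ᵥ x) ⬝ᵥ y = ∑ p : Fin d × Fin d, E p.1 p.2 * (x p.2 * y p.1) := by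
  simp only [Fintype.sum_prod_type, dotProduct, mulVec, Finset.sum_mul]
  exact Finset.sum_congr rfl fun a _ => Finset.sum_congr rfl fun b _ => by ring

lemma mulVec_dotProduct_mul_eq_sum (E : Matrix (Fin d) (Fin d) ℝ) (x y x' y' : Fin d → ℝ) :
    (E *ᵥ x) ⬝ᵥ y * ((E *ᵥ x') ⬝ᵥ y') = ∑ p : Fin d × Fin d, ∑ q : Fin d × Fin d,
      E p.1 p.2 * E q.1 q.2 * (x p.2 * y p.1 * (x' q.2 * y' q.1)) := by
  simp only [mulVec_dotProduct_eq_sum, Finset.sum_mul_sum]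
  exact Finset.sum_congr rfl fun p _ => Finset.sum_congr rfl fun q _ => by ring

lemma mulVec_dotProduct_mulVec_eq_sum (E : Matrix (Fin d) (Fin d) ℝ) (x y : Fin d → ℝ) :
    (E *ᵥ x) ⬝ᵥ (E *ᵥ y)
      = ∑ a, (E *ᵥ x) ⬝ᵥ Pi.single a 1 * ((E *ᵥ y) ⬝ᵥ Pi.single a 1) := by
  simp only [dotProduct_single, mul_one]
  rfl

lemma measurable_entry (a b : Fin d) : Measurable fun E : Matrix (Fin d) (Fin d) ℝ => E a b :=
  (measurable_pi_apply b).comp (measurable_pi_apply a)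

def HasStandardCovariance (μ : Measure (Matrix (Fin d) (Fin d) ℝ)) : Prop :=
  ∀ i j k l : Fin d, ∫ E, E i j * E k l ∂μ = if i = k ∧ j = l then 1 else 0

namespace HasStandardCovariance

variable {μ : Measure (Matrix (Fin d) (Fin d) ℝ)} (hμ : HasStandardCovariance μ)
include hμ

lemma integrable_entry_mul_self (a b : Fin d) : Integrable (fun E => E a b * E a b) μ := by
  by_contra h
  simpa [integral_undef h] using hμ a b a b

lemma integrable_entry_mul (a b c e : Fin d) : Integrable (fun E => E a b * E c e) μ := by
  refine Integrable.mono' ((hμ.integrable_entry_mul_self a b).add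
    (hμ.integrable_entry_mul_self c e))
    ((measurable_entry a b).mul (measurable_entry c e)).aestronglyMeasurable (ae_of_all _ ?_)
  intro E
  simp only [Real.norm_eq_abs, abs_mul, Pi.add_apply]
  nlinarith [sq_abs (E a b), sq_abs (E c e), sq_nonneg (|E a b| - |E c e|)]

lemma integrable_entry [IsFiniteMeasure μ] (a b : Fin d) : Integrable (fun E => E a b) μ := by
  refine Integrable.mono' ((hμ.integrable_entry_mul_self a b).add (integrable_const 1))
    (measurable_entry a b).aestronglyMeasurable (ae_of_all _ ?_)
  intro E
  simp only [Real.norm_eq_abs, Pi.add_apply]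
  nlinarith [sq_abs (E a b), sq_nonneg (|E a b| - 1)]

lemma integrable_mulVec_dotProduct [IsFiniteMeasure μ] (x y : Fin d → ℝ) :
    Integrable (fun E => (E *ᵥ x) ⬝ᵥ y) μ := by
  simp_rw [mulVec_dotProduct_eq_sum]
  exact integrable_finsetSum _ fun p _ => (hμ.integrable_entry _ _).mul_const _

lemma integral_mulVec_dotProduct [IsFiniteMeasure μ] (hmean : ∀ i j, ∫ E, E i j ∂μ = 0)
    (x y : Fin d → ℝ) : ∫ E, (E *ᵥ x) ⬝ᵥ y ∂μ = 0 := by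
  simp_rw [mulVec_dotProduct_eq_sum]
  rw [integral_finsetSum _ fun p _ => (hμ.integrable_entry _ _).mul_const _]
  simp [integral_mul_const, hmean]

lemma integrable_mulVec_dotProduct_mul (x y x' y' : Fin d → ℝ) :
    Integrable (fun E => (E *ᵥ x) ⬝ᵥ y * ((E *ᵥ x') ⬝ᵥ y')) μ := by
  simp_rw [mulVec_dotProduct_mul_eq_sum]
  exact integrable_finsetSum _ fun p _ => integrable_finsetSum _ fun q _ =>
    (hμ.integrable_entry_mul _ _ _ _).mul_const _

lemma integral_mulVec_dotProduct_mul (x y x' y' : Fin d → ℝ) :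
    ∫ E, (E *ᵥ x) ⬝ᵥ y * ((E *ᵥ x') ⬝ᵥ y') ∂μ = x ⬝ᵥ x' * (y ⬝ᵥ y') := by
  simp_rw [mulVec_dotProduct_mul_eq_sum]
  rw [integral_finsetSum _ fun p _ => integrable_finsetSum _ fun q _ =>
    (hμ.integrable_entry_mul _ _ _ _).mul_const _]
  have hpq : ∀ p q : Fin d × Fin d,
      ∫ E, E p.1 p.2 * E q.1 q.2 * (x p.2 * y p.1 * (x' q.2 * y' q.1)) ∂μ
        = if p = q then x p.2 * y p.1 * (x' q.2 * y' q.1) else 0 := fun p q => by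
    rw [integral_mul_const, hμ p.1 p.2 q.1 q.2]
    simp only [← Prod.ext_iff, ite_mul, one_mul, zero_mul]
  simp only [integral_finsetSum _ fun q _ => (hμ.integrable_entry_mul _ _ _ _).mul_const _, hpq,
    Finset.sum_ite_eq, Finset.mem_univ, if_true]
  simp only [dotProduct, Finset.sum_mul_sum, Fintype.sum_prod_type]
  rw [Finset.sum_comm]
  exact Finset.sum_congr rfl fun a _ => Finset.sum_congr rfl fun b _ => by ring

lemma integrable_mulVec_dotProduct_mulVec (x y : Fin d → ℝ) :
    Integrable (fun E => (E *ᵥ x) ⬝ᵥ (E *ᵥ y)) μ := by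
  simp_rw [mulVec_dotProduct_mulVec_eq_sum]
  exact integrable_finsetSum _ fun a _ => hμ.integrable_mulVec_dotProduct_mul _ _ _ _

lemma integral_mulVec_dotProduct_mulVec (x y : Fin d → ℝ) :
    ∫ E, (E *ᵥ x) ⬝ᵥ (E *ᵥ y) ∂μ = d * (x ⬝ᵥ y) := by
  simp_rw [mulVec_dotProduct_mulVec_eq_sum]
  rw [integral_finsetSum _ fun a _ => hμ.integrable_mulVec_dotProduct_mul _ _ _ _]
  simp only [hμ.integral_mulVec_dotProduct_mul]
  simp [dotProduct_single]

lemma integrable_mulVec_dotProduct_add_mul (x y : Fin d → ℝ) :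
    Integrable (fun E => ((E *ᵥ x) ⬝ᵥ y + (E *ᵥ y) ⬝ᵥ x) * ((E *ᵥ y) ⬝ᵥ x + (E *ᵥ x) ⬝ᵥ y)) μ := by
  have h := hμ.integrable_mulVec_dotProduct_mul
  simp_rw [add_mul, mul_add]
  exact ((h _ _ _ _).add (h _ _ _ _)).add ((h _ _ _ _).add (h _ _ _ _))

lemma integral_mulVec_dotProduct_add_mul (x y : Fin d → ℝ) :
    ∫ E, ((E *ᵥ x) ⬝ᵥ y + (E *ᵥ y) ⬝ᵥ x) * ((E *ᵥ y) ⬝ᵥ x + (E *ᵥ x) ⬝ᵥ y) ∂μ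
      = 2 * (x ⬝ᵥ x * (y ⬝ᵥ y)) + 2 * (x ⬝ᵥ y) ^ 2 := by
  have h := hμ.integrable_mulVec_dotProduct_mul
  simp_rw [add_mul, mul_add]
  rw [integral_add, integral_add, integral_add]
  · simp only [hμ.integral_mulVec_dotProduct_mul, dotProduct_comm y x]
    ring
  all_goals first | exact h _ _ _ _ | exact (h _ _ _ _).add (h _ _ _ _)

variable {v : Fin k → Fin d → ℝ}

lemma integrable_trace_gramLin [IsFiniteMeasure μ] :
    Integrable (fun E => (gramLin v E).trace) μ := by
  simp_rw [trace_gramLin]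
  exact integrable_finsetSum _ fun i _ =>
    (hμ.integrable_mulVec_dotProduct _ _).add (hμ.integrable_mulVec_dotProduct _ _)

lemma integral_trace_gramLin [IsFiniteMeasure μ] (hmean : ∀ i j, ∫ E, E i j ∂μ = 0) :
    ∫ E, (gramLin v E).trace ∂μ = 0 := by
  simp_rw [trace_gramLin]
  rw [integral_finsetSum _ fun i _ => ?_]
  · simp [integral_add (hμ.integrable_mulVec_dotProduct _ _)
      (hμ.integrable_mulVec_dotProduct _ _), hμ.integral_mulVec_dotProduct hmean]
  · exact (hμ.integrable_mulVec_dotProduct _ _).add (hμ.integrable_mulVec_dotProduct _ _)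

lemma integrable_trace_gramQuad : Integrable (fun E => (gramQuad v E).trace) μ := by
  simp_rw [trace_gramQuad]
  exact integrable_finsetSum _ fun i _ => hμ.integrable_mulVec_dotProduct_mulVec _ _

lemma integral_trace_gramQuad (hv : ∀ i, v i ⬝ᵥ v i = 1) :
    ∫ E, (gramQuad v E).trace ∂μ = k * d := by
  simp_rw [trace_gramQuad]
  rw [integral_finsetSum _ fun i _ => hμ.integrable_mulVec_dotProduct_mulVec _ _]
  simp [hμ.integral_mulVec_dotProduct_mulVec, hv]

lemma integrable_trace_gramLin_mul_self :
    Integrable (fun E => (gramLin v E * gramLin v E).trace) μ := by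
  simp_rw [trace_gramLin_mul_self]
  exact integrable_finsetSum _ fun i _ => integrable_finsetSum _ fun j _ =>
    hμ.integrable_mulVec_dotProduct_add_mul _ _

lemma integral_trace_gramLin_mul_self (hv : ∀ i j, v i ⬝ᵥ v j = if i = j then 1 else 0) :
    ∫ E, (gramLin v E * gramLin v E).trace ∂μ = 2 * k ^ 2 + 2 * k := by
  simp_rw [trace_gramLin_mul_self]
  rw [integral_finsetSum _ fun i _ => integrable_finsetSum _ fun j _ =>
    hμ.integrable_mulVec_dotProduct_add_mul _ _]
  simp_rw [integral_finsetSum _ fun j _ => hμ.integrable_mulVec_dotProduct_add_mul _ _,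
    hμ.integral_mulVec_dotProduct_add_mul, hv]
  simp [Finset.sum_add_distrib, sq]
  ring

lemma integrable_halfLogDetApprox [IsFiniteMeasure μ] (ε : ℝ) :
    Integrable (fun E => halfLogDetApprox ε (gramLin v E) (gramQuad v E)) μ :=
  (((hμ.integrable_trace_gramLin.const_mul ε).add
    (hμ.integrable_trace_gramQuad.const_mul _)).div_const 2).sub
    ((hμ.integrable_trace_gramLin_mul_self.const_mul _).div_const 4)

lemma integral_halfLogDetApprox [IsFiniteMeasure μ] (hmean : ∀ i j, ∫ E, E i j ∂μ = 0)
    (hv : ∀ i j, v i ⬝ᵥ v j = if i = j then 1 else 0) (ε : ℝ) :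
    ∫ E, halfLogDetApprox ε (gramLin v E) (gramQuad v E) ∂μ = k * (d - k - 1) * ε ^ 2 / 2 := by
  have hlin := (hμ.integrable_trace_gramLin (v := v)).const_mul ε
  have hquad := (hμ.integrable_trace_gramQuad (v := v)).const_mul (ε ^ 2)
  have hsq := (hμ.integrable_trace_gramLin_mul_self (v := v)).const_mul (ε ^ 2)
  simp only [halfLogDetApprox]
  rw [integral_sub, integral_div, integral_div, integral_add hlin hquad, integral_const_mul,
    integral_const_mul, integral_const_mul, hμ.integral_trace_gramLin hmean,
    hμ.integral_trace_gramQuad (by simp [hv]), hμ.integral_trace_gramLin_mul_self hv]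
  · ring
  exacts [(hlin.add hquad).div_const 2, hsq.div_const 4]

end HasStandardCovariance

lemma abs_integral_half_log_det_gram_sub_le {L ε : ℝ} (hL : 0 ≤ L)
    {μ : Measure (Matrix (Fin d) (Fin d) ℝ)} (hμ : memML d L μ) {v : Fin k → Fin d → ℝ}
    (hv : ∀ i j, v i ⬝ᵥ v j = if i = j then 1 else 0) (hε0 : 0 ≤ ε) (hε1 : ε ≤ 1)
    (hsmall : k * (2 * ε * (2 * L + L ^ 2)) ≤ 1 / 2) :
    |∫ E, 1 / 2 * Real.log (of fun i j => ((1 + ε • E) *ᵥ v i) ⬝ᵥ ((1 + ε • E) *ᵥ v j)).det ∂μ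
        - k * (d - k - 1) * ε ^ 2 / 2|
      ≤ (8 * k ^ 4 * (2 * L + L ^ 2) ^ 3 + k ^ 2 * (2 * L + L ^ 2) ^ 2) * ε ^ 3 := by
  obtain ⟨hprob, hsupp, hmean, hcov : HasStandardCovariance μ⟩ := hμ
  have hunit : ∀ i, v i ⬝ᵥ v i = 1 := fun i => by simpa using hv i i
  have hdet : Continuous fun E : Matrix (Fin d) (Fin d) ℝ =>
      (of fun i j => ((1 + ε • E) *ᵥ v i) ⬝ᵥ ((1 + ε • E) *ᵥ v j)).det := by
    fun_prop
  rw [← hcov.integral_halfLogDetApprox hmean hv ε]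
  refine abs_integral_sub_integral_le
    ((Real.measurable_log.comp hdet.measurable).const_mul _).aestronglyMeasurable
    (hcov.integrable_halfLogDetApprox ε) ?_
  filter_upwards [ae_opNorm_le hsupp] with E hE
  have hA : ∀ i j, |gramLin v E i j| ≤ 2 * L + L ^ 2 := fun i j =>
    (abs_gramLin_apply_le hunit E i j).trans (by nlinarith)
  have hB : ∀ i j, |gramQuad v E i j| ≤ 2 * L + L ^ 2 := fun i j =>
    (abs_gramQuad_apply_le hunit E i j).trans (by nlinarith [opNorm_nonneg E])
  rw [gram_one_add_smul hv]
  simpa using abs_half_log_det_sub_halfLogDetApprox_le (gramLin_isHermitian v E)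
    (gramQuad_isHermitian v E) (by positivity) hA hB hε0 hε1 (by simpa using hsmall)

end RMP

theorem stmt8_general (d k : ℕ) (L : ℝ) (hL : 0 < L) :
    ∃ C : ℝ, 0 < C ∧ ∃ ε₀ : ℝ, 0 < ε₀ ∧
      ∀ μ : Measure (Matrix (Fin d) (Fin d) ℝ), RMP.memML d L μ →
      ∀ v : Fin k → (Fin d → ℝ),
        (∀ i j : Fin k, v i ⬝ᵥ v j = if i = j then 1 else 0) →
      ∀ ε : ℝ, 0 < ε → ε < ε₀ →
        |(∫ (E : Matrix (Fin d) (Fin d) ℝ), (1 / 2) * Real.log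
              (Matrix.det (Matrix.of fun i j : Fin k =>
                (((1 : Matrix (Fin d) (Fin d) ℝ) + ε • E).mulVec (v i)) ⬝ᵥ
                (((1 : Matrix (Fin d) (Fin d) ℝ) + ε • E).mulVec (v j)))) ∂μ) -
            (k : ℝ) * ((d : ℝ) - k - 1) * ε ^ 2 / 2| ≤ C * ε ^ 3 := by
  set c := 2 * L + L ^ 2
  refine ⟨8 * k ^ 4 * c ^ 3 + k ^ 2 * c ^ 2 + 1, by positivity, 1 / (4 * k * c + 1), by positivity,
    fun μ hμ v hv ε hε hεε₀ => ?_⟩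
  rw [lt_div_iff₀ (by positivity)] at hεε₀
  have hkc : 0 ≤ k * c := by positivity
  refine (RMP.abs_integral_half_log_det_gram_sub_le hL.le hμ hv hε.le (by nlinarith)
    (by nlinarith)).trans ?_
  exact mul_le_mul_of_nonneg_right (by linarith) (by positivity)

/-- For `μ ∈ 𝓜_L` and any orthonormal family `v₁, …, v_k` in `ℝ^d`, the
expected log-volume distortion `∫ (1/2) log det G_ε(E) dμ(E) = k(d−k−1)ε²/2 + O(ε³)`
uniformly in the orthonormal family, where `G_ε(E)` is the Gram matrix of the vectors
`(I + εE)v₁, …, (I + εE)v_k`. -/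
theorem stmt8 (d k : ℕ) (hd : 1 ≤ d) (hk : 1 ≤ k) (hkd : k ≤ d) (L : ℝ) (hL : 0 < L) :
    ∃ C : ℝ, 0 < C ∧ ∃ ε₀ : ℝ, 0 < ε₀ ∧
      ∀ μ : Measure (Matrix (Fin d) (Fin d) ℝ), RMP.memML d L μ →
      ∀ v : Fin k → (Fin d → ℝ),
        (∀ i j : Fin k, v i ⬝ᵥ v j = if i = j then 1 else 0) →
      ∀ ε : ℝ, 0 < ε → ε < ε₀ →
        |(∫ (E : Matrix (Fin d) (Fin d) ℝ), (1 / 2) * Real.log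
              (Matrix.det (Matrix.of fun i j : Fin k =>
                (((1 : Matrix (Fin d) (Fin d) ℝ) + ε • E).mulVec (v i)) ⬝ᵥ
                (((1 : Matrix (Fin d) (Fin d) ℝ) + ε • E).mulVec (v j)))) ∂μ) -
            (k : ℝ) * ((d : ℝ) - k - 1) * ε ^ 2 / 2| ≤ C * ε ^ 3 :=
  stmt8_general d k L hL
end
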